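/- arXiv:math/0010154 — 4 statements merged into one kernel-verified Lean document; each statement's English description precedes it below -/
import Mathlib

section
/- The braid group B₃ admits the presentation ⟨a₁, a₂, a₃ | a₂a₁ = a₃a₂, a₃a₂ = a₁a₃⟩: the group presented by three generators x₁, x₂, x₃ subject to the relations x₂x₁ = x₃x₂ and x₃x₂ = x₁x₃ is isomorphic to B₃ via an isomorphism sending x₁ to σ₁, x₂ to σ₂, and x₃ to σ₁⁻¹σ₂σ₁. -/
/-- The braid relation σ₁σ₂σ₁ = σ₂σ₁σ₂ as a relator in the free group on two generators. -/
def braidRel : Set (FreeGroup (Fin 2)) :=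
  {FreeGroup.of 0 * FreeGroup.of 1 * FreeGroup.of 0 *
    (FreeGroup.of 1 * FreeGroup.of 0 * FreeGroup.of 1)⁻¹}

/-- The braid group on three strands, presented as ⟨σ₁, σ₂ | σ₁σ₂σ₁ = σ₂σ₁σ₂⟩. -/
abbrev B₃ : Type := PresentedGroup braidRel

/-- The first standard generator σ₁ of B₃. -/
def σ₁ : B₃ := PresentedGroup.of 0

/-- The second standard generator σ₂ of B₃. -/
def σ₂ : B₃ := PresentedGroup.of 1

def a₁ : B₃ := σ₁
def a₂ : B₃ := σ₂
def a₃ : B₃ := σ₁⁻¹ * σ₂ * σ₁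
/-- Relators for the presentation ⟨x₁, x₂, x₃ | x₂x₁ = x₃x₂, x₃x₂ = x₁x₃⟩. -/
def xRels : Set (FreeGroup (Fin 3)) :=
  {FreeGroup.of 1 * FreeGroup.of 0 * (FreeGroup.of 2 * FreeGroup.of 1)⁻¹,
   FreeGroup.of 2 * FreeGroup.of 1 * (FreeGroup.of 0 * FreeGroup.of 2)⁻¹}

/-! With c = a⁻¹ba, the braid relation aba = bab is equivalent to ba = cb, and ba = ac holds
trivially. Conversely, ba = ac forces c = a⁻¹ba, so x₃ is a redundant generator and deleting it
(a Tietze move) turns the relations x₂x₁ = x₃x₂ = x₁x₃ into the braid relation. -/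

section BraidRelations

variable {G : Type*} [Group G] {a b c : G}

theorem conj_relations_of_braid (h : a * b * a = b * a * b) :
    b * a = a⁻¹ * b * a * b ∧ a⁻¹ * b * a * b = a * (a⁻¹ * b * a) := by
  have h₁ : b * a = a⁻¹ * b * a * b :=
    calc b * a = a⁻¹ * (a * b * a) := by group
      _ = a⁻¹ * b * a * b := by rw [h]; group
  exact ⟨h₁, h₁.symm.trans (by group)⟩

theorem braid_of_conj_relations (h₁ : b * a = c * b) (h₂ : c * b = a * c) :
    c = a⁻¹ * b * a ∧ a * b * a = b * a * b := by
  have hc : c = a⁻¹ * b * a := by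
    rw [mul_assoc, eq_inv_mul_iff_mul_eq, h₁, h₂]
  refine ⟨hc, ?_⟩
  calc a * b * a = a * (b * a) := by group
    _ = a * (a⁻¹ * b * a * b) := by rw [h₁, hc]
    _ = b * a * b := by group

end BraidRelations

theorem σ₁_mul_σ₂_mul_σ₁ : σ₁ * σ₂ * σ₁ = σ₂ * σ₁ * σ₂ :=
  mul_inv_eq_one.mp (PresentedGroup.one_of_mem (rels := braidRel) rfl)

theorem xPresentation_rel₁ :
    (PresentedGroup.of 1 * PresentedGroup.of 0 : PresentedGroup xRels) =
      PresentedGroup.of 2 * PresentedGroup.of 1 :=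
  mul_inv_eq_one.mp (PresentedGroup.one_of_mem (rels := xRels) (Or.inl rfl))

theorem xPresentation_rel₂ :
    (PresentedGroup.of 2 * PresentedGroup.of 1 : PresentedGroup xRels) =
      PresentedGroup.of 0 * PresentedGroup.of 2 :=
  mul_inv_eq_one.mp (PresentedGroup.one_of_mem (rels := xRels) (Or.inr rfl))

def xPresentationToB₃ : PresentedGroup xRels →* B₃ :=
  PresentedGroup.toGroup (f := ![σ₁, σ₂, σ₁⁻¹ * σ₂ * σ₁]) <| by
    obtain ⟨h₁, h₂⟩ := conj_relations_of_braid σ₁_mul_σ₂_mul_σ₁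
    rintro r (rfl | rfl) <;> rw [map_mul, map_inv, mul_inv_eq_one]
    exacts [by simpa using h₁, by simpa using h₂]

def B₃ToXPresentation : B₃ →* PresentedGroup xRels :=
  PresentedGroup.toGroup (f := ![PresentedGroup.of 0, PresentedGroup.of 1]) <| by
    rintro r rfl
    rw [map_mul, map_inv, mul_inv_eq_one]
    simpa using (braid_of_conj_relations xPresentation_rel₁ xPresentation_rel₂).2

@[simp]
theorem xPresentationToB₃_of (i : Fin 3) :
    xPresentationToB₃ (.of i) = ![σ₁, σ₂, σ₁⁻¹ * σ₂ * σ₁] i :=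
  PresentedGroup.toGroup.of _

@[simp]
theorem B₃ToXPresentation_of (i : Fin 2) :
    B₃ToXPresentation (.of i) = ![PresentedGroup.of 0, PresentedGroup.of 1] i :=
  PresentedGroup.toGroup.of _

/-- The group presented by x₁, x₂, x₃ with relations x₂x₁ = x₃x₂ and x₃x₂ = x₁x₃ is
isomorphic to B₃ via an isomorphism sending x₁ ↦ σ₁, x₂ ↦ σ₂, x₃ ↦ σ₁⁻¹σ₂σ₁. -/
theorem xPresentation_iso_B₃ :
    ∃ e : PresentedGroup xRels ≃* B₃,
      e (PresentedGroup.of 0) = σ₁ ∧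
      e (PresentedGroup.of 1) = σ₂ ∧
      e (PresentedGroup.of 2) = σ₁⁻¹ * σ₂ * σ₁ := by
  refine ⟨MonoidHom.toMulEquiv xPresentationToB₃ B₃ToXPresentation ?_ ?_,
    xPresentationToB₃_of 0, xPresentationToB₃_of 1, xPresentationToB₃_of 2⟩
  · refine PresentedGroup.ext fun i => ?_
    fin_cases i <;>
      simp [σ₁, σ₂, ← (braid_of_conj_relations xPresentation_rel₁ xPresentation_rel₂).1]
  · refine PresentedGroup.ext fun i => ?_
    fin_cases i <;> simp [σ₁, σ₂]
end

section
/- For every natural number p ≥ 1, the element a₃⁻¹·(a₁a₂)ᵖ·a₁ is conjugate in B₃ to the element a₁·(a₁a₂)^{p-1}·a₁. -/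
/-- For every natural p ≥ 1, a₃⁻¹·(a₁a₂)ᵖ·a₁ is conjugate to a₁·(a₁a₂)^(p-1)·a₁. -/
theorem conj_a₃_inv_pow (p : ℕ) (hp : 1 ≤ p) :
    IsConj (a₃⁻¹ * (a₁ * a₂) ^ p * a₁) (a₁ * (a₁ * a₂) ^ (p - 1) * a₁) := by
  obtain ⟨q, rfl⟩ := Nat.exists_eq_add_of_le hp
  rw [isConj_iff]
  refine ⟨a₂ * a₁, ?_⟩
  simp only [Nat.add_sub_cancel_left, pow_add, pow_one, a₁, a₂, a₃]
  group
  rw [show ((1:ℤ) + q) = q + 1 from add_comm 1 (q:ℤ), zpow_add_one]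
  group
end

section
/- For every natural number m, the element a₁⁻¹·(a₃a₁a₂)ᵐ·a₃ is conjugate in B₃ to the element a₁⁻¹·a₂·(a₃a₁a₂)ᵐ. -/
/-- For every natural m, a₁⁻¹·(a₃a₁a₂)ᵐ·a₃ is conjugate to a₁⁻¹·a₂·(a₃a₁a₂)ᵐ. -/
theorem conj_a₁_inv_pow (m : ℕ) :
    IsConj (a₁⁻¹ * (a₃ * a₁ * a₂) ^ m * a₃) (a₁⁻¹ * a₂ * (a₃ * a₁ * a₂) ^ m) := by
  rw [isConj_iff]
  refine ⟨a₃, ?_⟩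
  have h : a₃ * a₁⁻¹ = a₁⁻¹ * a₂ := by simp only [a₁, a₂, a₃]; group
  calc a₃ * (a₁⁻¹ * (a₃ * a₁ * a₂) ^ m * a₃) * a₃⁻¹
      = (a₃ * a₁⁻¹) * (a₃ * a₁ * a₂) ^ m := by group
    _ = a₁⁻¹ * a₂ * (a₃ * a₁ * a₂) ^ m := by rw [h]
end

section
/- For every integer n ≥ 2 coprime to 3, the second derivative of the real function Δₙ(t) = (t^{3n} − 1)(t − 1)/((t³ − 1)(tⁿ − 1)t^{n−1}) tends to 2(n² − 1)/3 as t tends to 1 from the right; equivalently ½Δₙ''(1) = (n² − 1)/3, which is the Casson invariant of the (3,n) torus knot and is a positive integer. -/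
/-- The normalized Alexander polynomial of the (3,n) torus knot, as a real function. -/
noncomputable def torusAlexander (n : ℕ) (t : ℝ) : ℝ :=
  (t ^ (3 * n) - 1) * (t - 1) / ((t ^ 3 - 1) * (t ^ n - 1) * t ^ (n - 1))

/-!
Away from `t = 1`, cancelling `(t - 1)²` writes `Δₙ = N / D` with `N = ∑_{i < 3n} tⁱ` and
`D = (1 + t + t²) (∑_{i < n} tⁱ) tⁿ⁻¹`, a quotient of polynomials with `D(1) = 3n ≠ 0`. Near `1`
the second derivative of `N / D` is again a rational function, so `Δₙ''` tends to `(N / D)''(1)`.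
As `N` and `D` agree at `1` to first order (`N(1) = D(1)` and `N'(1) = D'(1)`, reflecting
`Δₙ(t) = Δₙ(1/t)`), the quotient rule collapses to `(N / D)''(1) = (N''(1) - D''(1)) / D(1)`,
and the derivatives of geometric sums at `1` are binomial coefficients. Finally `n² ≡ 1 (mod 3)`
when `3 ∤ n`.
-/

open Polynomial Filter Set Topology Finset

theorem Nat.cast_choose_three_mul_six {R : Type*} [CommRing R] (a : ℕ) :
    (a.choose 3 : R) * 6 = a * (a - 1) * (a - 2) := by
  have h : (a.descFactorial 3 : R) = (a.choose 3 : R) * 6 := by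
    rw [Nat.descFactorial_eq_factorial_mul_choose]
    push_cast [Nat.factorial]
    ring
  rw [← h, ← descPochhammer_eval_eq_descFactorial]
  simp [descPochhammer_succ_eval]

namespace Polynomial

section EvalDiv

variable {p q : ℝ[X]} {x : ℝ}

theorem hasDerivAt_eval_div_eval (hx : q.eval x ≠ 0) :
    HasDerivAt (fun t => p.eval t / q.eval t) ((wronskian q p).eval x / (q ^ 2).eval x) x := by
  refine ((p.hasDerivAt x).div (q.hasDerivAt x) hx).congr_deriv ?_
  simp only [wronskian, eval_sub, eval_mul, eval_pow]
  ring

theorem deriv_eval_div_eval_eventuallyEq (hx : q.eval x ≠ 0) :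
    deriv (fun t => p.eval t / q.eval t) =ᶠ[𝓝 x]
      fun t => (wronskian q p).eval t / (q ^ 2).eval t :=
  (q.continuous.continuousAt.eventually_ne hx).mono fun _ ht =>
    (hasDerivAt_eval_div_eval ht).deriv

theorem tendsto_deriv_deriv_eval_div_eval (hx : q.eval x ≠ 0) :
    Tendsto (deriv (deriv fun t => p.eval t / q.eval t)) (𝓝 x)
      (𝓝 ((wronskian (q ^ 2) (wronskian q p)).eval x / ((q ^ 2) ^ 2).eval x)) := by
  have hx₂ : (q ^ 2).eval x ≠ 0 := by simpa using hx
  have hx₄ : ((q ^ 2) ^ 2).eval x ≠ 0 := by simpa using hx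
  have hcont : ContinuousAt
      (fun t => (wronskian (q ^ 2) (wronskian q p)).eval t / ((q ^ 2) ^ 2).eval t) x :=
    (Polynomial.continuousAt _).div (Polynomial.continuousAt _) hx₄
  refine hcont.tendsto.congr' ?_
  exact ((deriv_eval_div_eval_eventuallyEq hx).deriv.trans
    (deriv_eval_div_eval_eventuallyEq hx₂)).symm

theorem eval_wronskian_sq_wronskian_div_of_eq (hq : q.eval x ≠ 0) (h₀ : p.eval x = q.eval x)
    (h₁ : (derivative p).eval x = (derivative q).eval x) :
    (wronskian (q ^ 2) (wronskian q p)).eval x / ((q ^ 2) ^ 2).eval x =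
      ((derivative (derivative p)).eval x - (derivative (derivative q)).eval x) / q.eval x := by
  simp only [wronskian, derivative_mul, derivative_sub, derivative_pow, eval_sub, eval_mul,
    eval_add, eval_pow, h₀, h₁]
  field_simp
  ring

end EvalDiv

section GeomSum

noncomputable def geomSumPoly (R : Type*) [Semiring R] (m : ℕ) : R[X] := ∑ i ∈ range m, X ^ i

theorem eval_geomSumPoly_mul_sub_one {R : Type*} [CommRing R] (m : ℕ) (t : R) :
    (geomSumPoly R m).eval t * (t - 1) = t ^ m - 1 := by
  simp [geomSumPoly, eval_finsetSum, geom_sum_mul]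

variable {R : Type*} [CommSemiring R]

theorem eval_one_iterate_derivative_X_pow (m k : ℕ) :
    (derivative^[k] (X ^ m : R[X])).eval 1 = m.descFactorial k := by
  simp [iterate_derivative_X_pow_eq_natCast_mul]

theorem eval_one_iterate_derivative_geomSumPoly (m k : ℕ) :
    (derivative^[k] (geomSumPoly R m)).eval 1 = k.factorial * m.choose (k + 1) := by
  induction m with
  | zero => simp [geomSumPoly]
  | succ m ih =>
    rw [geomSumPoly, sum_range_succ, iterate_map_add, eval_add, ← geomSumPoly, ih,
      eval_one_iterate_derivative_X_pow, Nat.descFactorial_eq_factorial_mul_choose,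
      Nat.choose_succ_succ', Nat.cast_mul, Nat.cast_add]
    ring

theorem eval_one_derivative_X_pow (m : ℕ) : (derivative (X ^ m : ℝ[X])).eval 1 = m := by
  simpa using eval_one_iterate_derivative_X_pow (R := ℝ) m 1

theorem eval_one_derivative_derivative_X_pow (m : ℕ) :
    (derivative (derivative (X ^ m : ℝ[X]))).eval 1 = m * (m - 1) := by
  have h := eval_one_iterate_derivative_X_pow (R := ℝ) m 2
  rwa [Nat.cast_descFactorial_two] at h

theorem eval_one_geomSumPoly (m : ℕ) : (geomSumPoly ℝ m).eval 1 = m := by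
  simp [geomSumPoly]

theorem eval_one_derivative_geomSumPoly (m : ℕ) :
    (derivative (geomSumPoly ℝ m)).eval 1 = m * (m - 1) / 2 := by
  simpa [Nat.cast_choose_two] using eval_one_iterate_derivative_geomSumPoly (R := ℝ) m 1

theorem eval_one_derivative_derivative_geomSumPoly (m : ℕ) :
    (derivative (derivative (geomSumPoly ℝ m))).eval 1 = m * (m - 1) * (m - 2) / 3 := by
  have h := eval_one_iterate_derivative_geomSumPoly (R := ℝ) m 2
  simp only [Function.iterate_succ_apply', Function.iterate_zero_apply] at h
  rw [h, eq_div_iff three_ne_zero, ← Nat.cast_choose_three_mul_six]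
  push_cast [Nat.factorial]
  ring

end GeomSum

end Polynomial

noncomputable def torusNum (n : ℕ) : ℝ[X] := geomSumPoly ℝ (3 * n)

noncomputable def torusDen (n : ℕ) : ℝ[X] := geomSumPoly ℝ 3 * geomSumPoly ℝ n * X ^ (n - 1)

theorem torusAlexander_eq_eval_div (n : ℕ) {t : ℝ} (ht : t ≠ 1) :
    torusAlexander n t = (torusNum n).eval t / (torusDen n).eval t := by
  have ht' : t - 1 ≠ 0 := sub_ne_zero.mpr ht
  simp only [torusAlexander, torusNum, torusDen, eval_mul, eval_pow, eval_X,
    ← eval_geomSumPoly_mul_sub_one]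
  rw [← mul_div_mul_right (eval t (geomSumPoly ℝ (3 * n))) _ (mul_ne_zero ht' ht')]
  congr 1 <;> ring

section TorusValues

variable {n : ℕ}

theorem eval_one_torusNum : (torusNum n).eval 1 = 3 * n := by
  simp [torusNum, eval_one_geomSumPoly]

theorem eval_one_torusDen : (torusDen n).eval 1 = 3 * n := by
  simp [torusDen, eval_one_geomSumPoly]

theorem eval_one_derivative_torusNum_eq_torusDen (hn : 1 ≤ n) :
    (derivative (torusNum n)).eval 1 = (derivative (torusDen n)).eval 1 := by
  simp only [torusNum, torusDen, derivative_mul, eval_add, eval_mul, eval_pow, eval_X, one_pow,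
    mul_one, eval_one_geomSumPoly, eval_one_derivative_geomSumPoly, eval_one_derivative_X_pow,
    Nat.cast_mul, Nat.cast_ofNat, Nat.cast_sub hn, Nat.cast_one]
  ring

theorem eval_one_derivative_derivative_torusNum_sub_torusDen (hn : 1 ≤ n) :
    (derivative (derivative (torusNum n))).eval 1 - (derivative (derivative (torusDen n))).eval 1 =
      2 * n * ((n : ℝ) ^ 2 - 1) := by
  simp only [torusNum, torusDen, derivative_mul, derivative_add, eval_add, eval_mul, eval_pow,
    eval_X, one_pow, mul_one, eval_one_geomSumPoly, eval_one_derivative_geomSumPoly,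
    eval_one_derivative_derivative_geomSumPoly, eval_one_derivative_X_pow,
    eval_one_derivative_derivative_X_pow, Nat.cast_mul, Nat.cast_ofNat, Nat.cast_sub hn,
    Nat.cast_one]
  ring

theorem tendsto_deriv_deriv_torusNum_div_torusDen (hn : 1 ≤ n) :
    Tendsto (deriv (deriv fun t => (torusNum n).eval t / (torusDen n).eval t)) (𝓝 1)
      (𝓝 (2 * ((n : ℝ) ^ 2 - 1) / 3)) := by
  have hn' : (0 : ℝ) < n := by exact_mod_cast hn
  have hD : (torusDen n).eval 1 ≠ 0 := by rw [eval_one_torusDen]; positivity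
  convert tendsto_deriv_deriv_eval_div_eval hD using 2
  rw [eval_wronskian_sq_wronskian_div_of_eq hD (by rw [eval_one_torusNum, eval_one_torusDen])
    (eval_one_derivative_torusNum_eq_torusDen hn),
    eval_one_derivative_derivative_torusNum_sub_torusDen hn, eval_one_torusDen]
  field_simp

end TorusValues

theorem exists_nat_sq_sub_one_div_three_eq {n : ℕ} (hn : 2 ≤ n) (h : Nat.Coprime n 3) :
    ∃ k : ℕ, 0 < k ∧ ((n : ℝ) ^ 2 - 1) / 3 = (k : ℝ) := by
  have h3 : ¬ 3 ∣ n := (Nat.Prime.coprime_iff_not_dvd Nat.prime_three).1 h.symm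
  have hsq : n ^ 2 % 3 = 1 := by
    rcases (by omega : n % 3 = 1 ∨ n % 3 = 2) with hr | hr <;> simp [Nat.pow_mod, hr]
  have h4 : 4 ≤ n ^ 2 := by nlinarith
  refine ⟨n ^ 2 / 3, by omega, ?_⟩
  have hk : ((n ^ 2 : ℕ) : ℝ) = ((3 * (n ^ 2 / 3) + 1 : ℕ) : ℝ) := congrArg _ (by omega)
  push_cast at hk
  rw [div_eq_iff three_ne_zero]
  linarith

/-- For every n ≥ 2 coprime to 3, the second derivative of Δₙ tends to 2(n² − 1)/3 as
t → 1⁺; equivalently ½Δₙ''(1) = (n² − 1)/3, the Casson invariant of the (3,n) torus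
knot, which is a positive integer. -/
theorem torusAlexander_second_deriv (n : ℕ) (hn : 2 ≤ n) (h : Nat.Coprime n 3) :
    Filter.Tendsto (deriv (deriv (torusAlexander n))) (nhdsWithin 1 (Set.Ioi 1))
      (nhds (2 * ((n : ℝ) ^ 2 - 1) / 3)) ∧
    ∃ k : ℕ, 0 < k ∧ ((n : ℝ) ^ 2 - 1) / 3 = (k : ℝ) := by
  refine ⟨?_, exists_nat_sq_sub_one_div_three_eq hn h⟩
  have hEq : EqOn (torusAlexander n) (fun t => (torusNum n).eval t / (torusDen n).eval t)
      (Ioi 1) := fun t ht => torusAlexander_eq_eval_div n (ne_of_gt ht)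
  refine ((tendsto_deriv_deriv_torusNum_div_torusDen (by omega)).mono_left
    nhdsWithin_le_nhds).congr' ?_
  exact eventually_nhdsWithin_of_forall fun t ht =>
    ((hEq.deriv isOpen_Ioi).deriv isOpen_Ioi ht).symm
end
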